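/- Let (Ω(S),T) be a minimal substitution dynamical system with unique T-invariant Borel probability measure μ. Let u∈W(S) start with a letter e∈C and suppose uuue∈W(S). Set n_k=|S^k(u)| and Ω(n_k)={ω∈Ω(S) : ω(−n_k+l)=ω(l)=ω(n_k+l) for all 0≤l≤n_k−1}. Then limsup_{k→∞} μ(Ω(n_k)) > 0. -/

import Mathlib

open List Filter Topology MeasureTheory

namespace SubstLR

variable {A : Type*}

/-- Apply the substitution `S` to a finite word. -/
def subst (S : A → List A) (w : List A) : List A := w.flatMap S

/-- `iter S n w` is `S^n(w)`. -/
def iter (S : A → List A) (n : ℕ) (w : List A) : List A := (subst S)^[n] w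

/-- The set `W(S)` of finite words associated to `S`. -/
def WS (S : A → List A) : Set (List A) := {w | ∃ (a : A) (n : ℕ), w <:+: iter S n [a]}

/-- `w` is a finite factor of the two-sided infinite word `ω`. -/
def IsFactor (w : List A) (ω : ℤ → A) : Prop :=
  ∃ k : ℤ, w = (List.range w.length).map fun i => ω (k + i)

/-- The subshift `Ω(S)` associated to `S`. -/
def OmegaS (S : A → List A) : Set (ℤ → A) := {ω | ∀ w, IsFactor w ω → w ∈ WS S}

/-- The set `W(Ω(S))` of finite factors of elements of `Ω(S)`. -/
def WOmega (S : A → List A) : Set (List A) := {w | ∃ ω ∈ OmegaS S, IsFactor w ω}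

/-- Condition (ℓ): `|S^n(e)| → ∞`. -/
def CondL (S : A → List A) (e : A) : Prop :=
  Tendsto (fun n => (iter S n [e]).length) atTop atTop

/-- Condition (o): every letter occurs in some `S^n(e)`. -/
def CondO (S : A → List A) (e : A) : Prop := ∀ a : A, ∃ n : ℕ, a ∈ iter S n [e]

/-- Condition (c): `W(S) = W(Ω(S))`. -/
def CondC (S : A → List A) : Prop := WS S = WOmega S

/-- `(Ω(S),T)` is a substitution dynamical system. -/
def IsSubstSystem (S : A → List A) : Prop := (∃ e, CondL S e ∧ CondO S e) ∧ CondC S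

/-- `v` occurs with bounded gaps in the set of words `W`. -/
def BddGaps (v : List A) (W : Set (List A)) : Prop :=
  ∃ L : ℕ, 0 < L ∧ ∀ w ∈ W, L ≤ w.length → v <:+: w

/-- Condition (BG) for the letter `e`. -/
def BG (S : A → List A) (e : A) : Prop := CondL S e ∧ CondO S e ∧ BddGaps [e] (WS S)

/-- The shift by `k`; `shift 1` is the map `T`. -/
def shift (k : ℤ) (ω : ℤ → A) : ℤ → A := fun n => ω (n + k)

/-- `(Ω(S),T)` is minimal: every orbit is dense in `Ω(S)`. -/
def Minimal [TopologicalSpace A] (S : A → List A) : Prop :=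
  ∀ ω ∈ OmegaS S, OmegaS S ⊆ closure {ω' | ∃ k : ℤ, ω' = shift k ω}

/-- `(Ω(S),T)` is linearly repetitive. -/
def LinRep (S : A → List A) : Prop :=
  ∃ C : ℝ, 0 < C ∧ ∀ v ∈ WS S, ∀ w ∈ WS S, C * v.length ≤ (w.length : ℝ) → v <:+: w

/-- `(Ω(S),T)` is aperiodic. -/
def Aperiodic (S : A → List A) : Prop :=
  ∀ ω ∈ OmegaS S, ∀ k : ℤ, k ≠ 0 → shift k ω ≠ ω

/-- The set `B` of letters `a` with `limsup |S^n(a)| < ∞`. -/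
def Bset (S : A → List A) : Set A := {a | ∃ M : ℕ, ∀ n, (iter S n [a]).length ≤ M}

/-- The set `C = A ∖ B`. -/
def Cset (S : A → List A) : Set A := (Bset S)ᶜ

open Classical in
/-- `tilde S w` is the word obtained from `w` by deleting all letters of `B`. -/
noncomputable def tilde (S : A → List A) (w : List A) : List A :=
  w.filter fun x => decide (x ∈ Cset S)

/-- The induced substitution `S̃`. -/
noncomputable def tildeS (S : A → List A) : A → List A := fun x => tilde S (S x)


/-! The letter lengths `|S^k(a)|` are all within a constant factor `K` of `m_k = |S^k(e)|`, since
every letter occurs in a fixed `S^J(e)`. By minimality the cube `uuue` occurs with bounded gaps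
`R` in `W(S)`; desubstituting, every word of `W(S)` of length `≥ (R+2)·K·m_k` contains
`S^k(uuue) = wwwf` with `w = S^k(u)` and `f = S^k(e)` a prefix of `w`. Hence in every window of
that length some `m_k + 1` consecutive shifts of `ω` lie in `Ω(n_k)`, and integrating over the
window against the invariant measure gives `μ(Ω(n_k)) ≥ (m_k + 1) / ((R+2)·K·m_k + 1)`, which is
bounded below uniformly in `k`. -/

open scoped ENNReal

section Words

lemma iter_append (S : A → List A) (k : ℕ) (x y : List A) :
    iter S k (x ++ y) = iter S k x ++ iter S k y := by
  induction k with
  | zero => rfl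
  | succ k ih =>
    simp only [iter, Function.iterate_succ_apply'] at ih ⊢
    rw [ih, subst, subst, subst, List.flatMap_append]

lemma iter_add (S : A → List A) (j k : ℕ) (w : List A) :
    iter S (j + k) w = iter S j (iter S k w) :=
  Function.iterate_add_apply ..

lemma iter_comm (S : A → List A) (j k : ℕ) (w : List A) :
    iter S j (iter S k w) = iter S k (iter S j w) := by
  rw [← iter_add, ← iter_add, Nat.add_comm]

lemma iter_nil (S : A → List A) (k : ℕ) : iter S k ([] : List A) = [] :=
  Function.iterate_fixed rfl k

lemma iter_flatMap (S : A → List A) (k : ℕ) (z : List A) :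
    iter S k z = z.flatMap fun x => iter S k [x] := by
  induction z with
  | nil => exact iter_nil S k
  | cons b z ih => rw [List.flatMap_cons, ← ih, ← iter_append, List.singleton_append]

lemma iter_infix {S : A → List A} {w w' : List A} (k : ℕ) (h : w <:+: w') :
    iter S k w <:+: iter S k w' := by
  obtain ⟨s, t, rfl⟩ := h
  rw [iter_append, iter_append]
  exact List.infix_append _ _ _

lemma singleton_mem_WS (S : A → List A) (a : A) : [a] ∈ WS S :=
  ⟨a, 0, List.infix_refl _⟩

lemma iter_mem_WS {S : A → List A} {w : List A} (k : ℕ) (hw : w ∈ WS S) :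
    iter S k w ∈ WS S := by
  obtain ⟨a, n, h⟩ := hw
  exact ⟨a, k + n, by rw [iter_add]; exact iter_infix k h⟩

end Words

section Desubstitution

variable {α β : Type*} {F : α → List β} {Λ : ℕ}

lemma length_flatMap_le (hF : ∀ x, (F x).length ≤ Λ) (z : List α) :
    (z.flatMap F).length ≤ z.length * Λ := by
  rw [List.length_flatMap, ← smul_eq_mul, ← List.length_map (f := fun a => (F a).length)]
  exact List.sum_le_card_nsmul _ _ (by simpa using fun a _ => hF a)

lemma exists_suffix_flatMap_of_eq_append (hF : ∀ x, (F x).length ≤ Λ) :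
    ∀ {z : List α} {s r : List β}, z.flatMap F = s ++ r →
      ∃ z₂, z₂ <:+ z ∧ z₂.flatMap F <:+ r ∧ r.length ≤ (z₂.flatMap F).length + Λ
  | [], s, r, h => by
    obtain ⟨-, rfl⟩ := List.append_eq_nil_iff.mp h.symm
    exact ⟨[], List.suffix_refl _, List.suffix_refl _, Nat.zero_le _⟩
  | b :: z, s, r, h => by
    rw [List.flatMap_cons] at h
    rcases List.append_eq_append_iff.mp h with ⟨a', -, ha'⟩ | ⟨c', hc', rfl⟩
    · obtain ⟨z₂, hz, hr, hlen⟩ := exists_suffix_flatMap_of_eq_append hF ha'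
      exact ⟨z₂, hz.trans (List.suffix_cons b z), hr, hlen⟩
    · have hb := hF b
      rw [hc', List.length_append] at hb
      refine ⟨z, List.suffix_cons b z, List.suffix_append c' _, ?_⟩
      rw [List.length_append]
      omega

lemma exists_prefix_flatMap_of_eq_append (hF : ∀ x, (F x).length ≤ Λ) :
    ∀ {z : List α} {l t : List β}, z.flatMap F = l ++ t →
      ∃ z₁, z₁ <+: z ∧ z₁.flatMap F <+: l ∧ l.length ≤ (z₁.flatMap F).length + Λ
  | [], l, t, h => by
    obtain ⟨rfl, -⟩ := List.append_eq_nil_iff.mp h.symm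
    exact ⟨[], List.prefix_refl _, List.prefix_refl _, Nat.zero_le _⟩
  | b :: z, l, t, h => by
    rw [List.flatMap_cons] at h
    rcases List.append_eq_append_iff.mp h with ⟨a', rfl, ha'⟩ | ⟨c', hc', -⟩
    · obtain ⟨z₁, hz, hl, hlen⟩ := exists_prefix_flatMap_of_eq_append hF ha'
      refine ⟨b :: z₁, List.cons_prefix_cons.mpr ⟨rfl, hz⟩, ?_, ?_⟩
      · rw [List.flatMap_cons]
        exact (List.prefix_append_right_inj _).mpr hl
      · simp only [List.flatMap_cons, List.length_append]
        omega
    · have hb := hF b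
      rw [hc', List.length_append] at hb
      exact ⟨[], List.nil_prefix, List.nil_prefix, by simp; omega⟩

lemma exists_infix_flatMap_of_eq_append (hF : ∀ x, (F x).length ≤ Λ) {z : List α}
    {s w t : List β} (h : z.flatMap F = s ++ w ++ t) :
    ∃ z', z' <:+: z ∧ z'.flatMap F <:+: w ∧ w.length ≤ (z'.flatMap F).length + 2 * Λ := by
  rw [List.append_assoc] at h
  obtain ⟨z₂, hz₂, ⟨x, hx⟩, hlen₂⟩ := exists_suffix_flatMap_of_eq_append hF h
  rcases List.append_eq_append_iff.mp hx with ⟨c', rfl, hc'⟩ | ⟨c', -, rfl⟩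
  · obtain ⟨z₁, hz₁, hl, hlen₁⟩ := exists_prefix_flatMap_of_eq_append hF hc'
    refine ⟨z₁, hz₁.isInfix.trans hz₂.isInfix,
      hl.isInfix.trans (List.suffix_append x c').isInfix, ?_⟩
    rw [hc'] at hlen₂
    simp only [List.length_append] at hlen₂ ⊢
    omega
  · refine ⟨[], List.nil_infix, List.nil_infix, ?_⟩
    simp only [List.length_append] at hlen₂
    omega

end Desubstitution

section Growth

variable {S : A → List A}

lemma length_iter_le {j K : ℕ} (hK : ∀ a, (iter S j [a]).length ≤ K) (w : List A) :
    (iter S j w).length ≤ w.length * K := by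
  rw [iter_flatMap]
  exact length_flatMap_le hK w

lemma exists_le_length_iter {e : A} (he : e ∈ Cset S) (k R : ℕ) :
    ∃ N, k ≤ N ∧ R ≤ (iter S N [e]).length := by
  by_contra! h
  refine he ⟨R + ∑ j ∈ Finset.range k, (iter S j [e]).length, fun n => ?_⟩
  rcases lt_or_ge n k with hn | hn
  · exact (Finset.single_le_sum (f := fun j => (iter S j [e]).length) (fun j _ => Nat.zero_le _)
      (Finset.mem_range.mpr hn)).trans (Nat.le_add_left _ _)
  · exact (h n hn).le.trans (Nat.le_add_right _ _)

lemma length_iter_pos {e : A} (he : e ∈ Cset S) (k : ℕ) : 0 < (iter S k [e]).length := by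
  obtain ⟨N, hkN, hN⟩ := exists_le_length_iter he k 1
  refine List.length_pos_iff.mpr fun h => ?_
  rw [← Nat.sub_add_cancel hkN, iter_add, h, iter_nil] at hN
  exact Nat.not_succ_le_zero 0 hN

lemma exists_infix_iter_of_bddGaps {e : A} (he : e ∈ Cset S) {w : List A}
    (hw : BddGaps w (WS S)) (k : ℕ) : ∃ N, k ≤ N ∧ w <:+: iter S N [e] := by
  obtain ⟨R, -, hR⟩ := hw
  obtain ⟨N, hkN, hN⟩ := exists_le_length_iter he k R
  exact ⟨N, hkN, hR _ (iter_mem_WS N (singleton_mem_WS S e)) hN⟩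

end Growth

section Shift

lemma shift_one_iterate (j : ℕ) : (shift (A := A) 1)^[j] = shift j := by
  induction j with
  | zero => funext ω n; simp [shift]
  | succ j ih =>
    funext ω n
    rw [Function.iterate_succ_apply', ih]
    simp only [shift]
    push_cast
    ring_nf

lemma continuous_shift [TopologicalSpace A] (k : ℤ) : Continuous (shift (A := A) k) :=
  continuous_pi fun _ => continuous_apply _

end Shift

section Occurrences

variable {ω : ℤ → A} {v w : List A} {p q : ℤ}

def OccAt (ω : ℤ → A) (v : List A) (p : ℤ) : Prop :=
  ∀ i (h : i < v.length), ω (p + i) = v[i]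

def window (ω : ℤ → A) (p : ℤ) (n : ℕ) : List A :=
  (List.range n).map fun i : ℕ => ω (p + i)

@[simp] lemma length_window (ω : ℤ → A) (p : ℤ) (n : ℕ) : (window ω p n).length = n := by
  simp [window]

lemma window_add (ω : ℤ → A) (p : ℤ) (m n : ℕ) :
    window ω p (m + n) = window ω p m ++ window ω (p + m) n := by
  simp only [window, List.range_add, List.map_append, List.map_map]
  congr 1
  refine List.map_congr_left fun i _ => ?_
  simp only [Function.comp_apply, Nat.cast_add]
  ring_nf

lemma occAt_iff_window_eq : OccAt ω v p ↔ window ω p v.length = v := by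
  refine ⟨fun h => List.ext_getElem (by simp) fun i _ hi => ?_, fun h i hi => ?_⟩
  · simpa [window] using h i hi
  · conv_rhs => rw [List.getElem_of_eq h.symm]
    simp [window]

lemma occAt_window (ω : ℤ → A) (p : ℤ) (n : ℕ) : OccAt ω (window ω p n) p := by
  rw [occAt_iff_window_eq, length_window]

lemma isFactor_iff_exists_occAt : IsFactor v ω ↔ ∃ p, OccAt ω v p := by
  simp only [occAt_iff_window_eq, window, IsFactor, eq_comm (a := v), List.bind_eq_flatMap,
    List.pure_def, ← List.map_eq_flatMap, List.map_map, Function.comp_def]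

lemma occAt_shift {j : ℤ} : OccAt (shift j ω) v p ↔ OccAt ω v (p + j) := by
  simp only [OccAt, shift, add_right_comm]

lemma shift_mem_OmegaS {S : A → List A} (j : ℤ) (hω : ω ∈ OmegaS S) : shift j ω ∈ OmegaS S :=
  fun w hw => by
    obtain ⟨p, hp⟩ := isFactor_iff_exists_occAt.mp hw
    exact hω w (isFactor_iff_exists_occAt.mpr ⟨p + j, occAt_shift.mp hp⟩)

lemma window_mem_WS {S : A → List A} (hω : ω ∈ OmegaS S) (p : ℤ) (n : ℕ) :
    window ω p n ∈ WS S :=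
  hω _ (isFactor_iff_exists_occAt.mpr ⟨p, occAt_window ω p n⟩)

lemma OccAt.exists_occAt_of_infix (hw : OccAt ω w p) (hv : v <:+: w) :
    ∃ i : ℕ, i + v.length ≤ w.length ∧ OccAt ω v (p + i) := by
  obtain ⟨s, t, rfl⟩ := hv
  refine ⟨s.length, by simp, ?_⟩
  rw [occAt_iff_window_eq, List.length_append, List.length_append, window_add,
    window_add] at hw
  rw [occAt_iff_window_eq]
  exact (List.append_inj (List.append_inj hw (by simp)).1 (by simp)).2

lemma OccAt.infix_of_occAt (hw : OccAt ω w p) (hv : OccAt ω v q) (hpq : p ≤ q)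
    (hlen : q + v.length ≤ p + w.length) : v <:+: w := by
  obtain ⟨d, rfl⟩ : ∃ d : ℕ, q = p + d := ⟨(q - p).toNat, by omega⟩
  obtain ⟨r, hr⟩ : ∃ r, w.length = d + v.length + r := ⟨w.length - d - v.length, by omega⟩
  rw [occAt_iff_window_eq] at hw hv
  rw [← hw, hr, window_add, window_add, hv]
  exact List.infix_append _ _ _

lemma OccAt.apply_eq_apply_add {P : List A} {n : ℕ} (h : OccAt ω P q)
    (hP : P.drop n <+: P) {x : ℤ} (hqx : q ≤ x) (hx : x + n < q + P.length) :
    ω x = ω (x + n) := by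
  obtain ⟨i, rfl⟩ : ∃ i : ℕ, x = q + i := ⟨(x - q).toNat, by omega⟩
  have hi : n + i < P.length := by omega
  calc ω (q + i) = P[i] := h i (by omega)
    _ = (P.drop n)[i]'(by simp; omega) := (hP.getElem _).symm
    _ = P[n + i] := List.getElem_drop ..
    _ = ω (q + i + n) := by rw [← h (n + i) hi]; push_cast; ring_nf

end Occurrences

section Minimality

variable [TopologicalSpace A] [DiscreteTopology A] {S : A → List A}

lemma isOpen_setOf_occAt (v : List A) (p : ℤ) : IsOpen {ω : ℤ → A | OccAt ω v p} := by
  have h : {ω : ℤ → A | OccAt ω v p} =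
      ⋂ i : Fin v.length, (fun ω : ℤ → A => ω (p + i)) ⁻¹' {v[(i : ℕ)]} := by
    ext ω
    simp only [OccAt, Set.mem_ofPred_eq, Set.mem_iInter, Set.mem_preimage,
      Set.mem_singleton_iff, Fin.forall_iff]
  rw [h]
  exact isOpen_iInter_of_finite fun i => (continuous_apply _).isOpen_preimage _ (isOpen_discrete _)

lemma isClosed_OmegaS (S : A → List A) : IsClosed (OmegaS S) := by
  have h : OmegaS S = ⋂ (w : List A) (p : ℤ) (_ : w ∉ WS S), {ω | OccAt ω w p}ᶜ := by
    ext ω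
    simp only [OmegaS, isFactor_iff_exists_occAt, Set.mem_ofPred_eq, Set.mem_iInter,
      Set.mem_compl_iff]
    exact ⟨fun h w p hw hocc => hw (h w ⟨p, hocc⟩), fun h w ⟨p, hocc⟩ => by_contra fun hw =>
      h w p hw hocc⟩
  rw [h]
  exact isClosed_iInter fun w => isClosed_iInter fun p => isClosed_iInter fun _ =>
    (isOpen_setOf_occAt w p).isClosed_compl

lemma exists_occAt_of_minimal (hmin : Minimal S) (hC : CondC S) {v : List A} (hv : v ∈ WS S)
    {ω : ℤ → A} (hω : ω ∈ OmegaS S) : ∃ q, OccAt ω v q := by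
  obtain ⟨ω₁, hω₁, hfac⟩ : v ∈ WOmega S := hC ▸ hv
  obtain ⟨p, hp⟩ := isFactor_iff_exists_occAt.mp hfac
  obtain ⟨-, hU, j, rfl⟩ := mem_closure_iff.mp (hmin ω hω hω₁) _ (isOpen_setOf_occAt v p) hp
  exact ⟨p + j, occAt_shift.mp hU⟩

variable [Finite A]

lemma exists_forall_occAt_abs_le (hmin : Minimal S) (hC : CondC S) {v : List A}
    (hv : v ∈ WS S) : ∃ P : ℕ, ∀ ω ∈ OmegaS S, ∃ q : ℤ, |q| ≤ P ∧ OccAt ω v q := by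
  obtain ⟨t, ht⟩ := (isClosed_OmegaS S).isCompact.elim_finite_subcover
    (fun q => {ω | OccAt ω v q}) (isOpen_setOf_occAt v) fun ω hω =>
      Set.mem_iUnion.mpr (exists_occAt_of_minimal hmin hC hv hω)
  refine ⟨t.sup Int.natAbs, fun ω hω => ?_⟩
  obtain ⟨q, hq, hocc⟩ := Set.mem_iUnion₂.mp (ht hω)
  refine ⟨q, ?_, hocc⟩
  rw [Int.abs_eq_natAbs, Nat.cast_le]
  exact Finset.le_sup (f := Int.natAbs) hq

lemma bddGaps_WS (hmin : Minimal S) (hC : CondC S) {v : List A} (hv : v ∈ WS S) :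
    BddGaps v (WS S) := by
  obtain ⟨P, hP⟩ := exists_forall_occAt_abs_le hmin hC hv
  refine ⟨2 * P + v.length + 1, by omega, fun w hw hlen => ?_⟩
  obtain ⟨ω, hω, hfac⟩ : w ∈ WOmega S := hC ▸ hw
  obtain ⟨p, hp⟩ := isFactor_iff_exists_occAt.mp hfac
  obtain ⟨q, hq, hv⟩ := hP _ (shift_mem_OmegaS (p + P) hω)
  rw [abs_le] at hq
  exact hp.infix_of_occAt (occAt_shift.mp hv) (by omega) (by omega)

variable {e : A}

lemma exists_length_iter_le_mul (hmin : Minimal S) (hC : CondC S) (he : e ∈ Cset S) :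
    ∃ K, 0 < K ∧ ∀ k a, (iter S k [a]).length ≤ K * (iter S k [e]).length := by
  choose R _ hR using fun a => bddGaps_WS hmin hC (singleton_mem_WS S a)
  obtain ⟨Rmax, hRmax⟩ := Finite.exists_le R
  obtain ⟨J, -, hJ⟩ := exists_le_length_iter he 0 Rmax
  have hletter : ∀ a, [a] <:+: iter S J [e] := fun a =>
    hR a _ (iter_mem_WS J (singleton_mem_WS S e)) ((hRmax a).trans hJ)
  obtain ⟨K, hK⟩ := Finite.exists_le fun a => (iter S J [a]).length
  refine ⟨K, (length_iter_pos he J).trans_le (hK e), fun k a => ?_⟩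
  calc (iter S k [a]).length ≤ (iter S J (iter S k [e])).length := by
        rw [iter_comm]; exact (iter_infix k (hletter a)).length_le
    _ ≤ (iter S k [e]).length * K := length_iter_le hK _
    _ = K * (iter S k [e]).length := Nat.mul_comm ..

lemma iter_infix_of_length_le (hmin : Minimal S) (hC : CondC S) (he : e ∈ Cset S)
    {v : List A} {R Λ k : ℕ} (hv : ∀ w ∈ WS S, R ≤ w.length → v <:+: w)
    (hΛ : ∀ x, (iter S k [x]).length ≤ Λ) (hΛpos : 0 < Λ) {w : List A} (hw : w ∈ WS S)
    (hlen : (R + 2) * Λ ≤ w.length) : iter S k v <:+: w := by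
  obtain ⟨N, hkN, s, t, hst⟩ := exists_infix_iter_of_bddGaps he (bddGaps_WS hmin hC hw) k
  have hsplit : (iter S (N - k) [e]).flatMap (fun x => iter S k [x]) = s ++ w ++ t := by
    rw [← iter_flatMap, ← iter_add, Nat.add_sub_cancel' hkN, hst]
  obtain ⟨z, hz, hzw, hwz⟩ := exists_infix_flatMap_of_eq_append hΛ hsplit
  rw [← iter_flatMap] at hzw hwz
  have hRz : R ≤ z.length := by
    have := length_iter_le hΛ z
    exact Nat.le_of_mul_le_mul_right (by nlinarith) hΛpos
  exact (iter_infix k (hv z ⟨e, N - k, hz⟩ hRz)).trans hzw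

end Minimality

section Cubes

/-- The set `Ω(n)` of the statement. -/
def cubeSet (S : A → List A) (n : ℕ) : Set (ℤ → A) :=
  {ω ∈ OmegaS S | ∀ l : ℕ, l < n → ω (-(n : ℤ) + l) = ω l ∧ ω l = ω ((n : ℤ) + l)}

lemma drop_length_prefix_cube {w f : List A} (hf : f <+: w) :
    (w ++ w ++ w ++ f).drop w.length <+: w ++ w ++ w ++ f := by
  rw [List.append_assoc, List.append_assoc, List.drop_left]
  exact (List.prefix_append_right_inj w).2 ((List.prefix_append_right_inj w).2
    (hf.trans (List.prefix_append w f)))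

lemma isClosed_cubeSet [TopologicalSpace A] [DiscreteTopology A] (S : A → List A) (n : ℕ) :
    IsClosed (cubeSet S n) := by
  have h : cubeSet S n = OmegaS S ∩ ⋂ (l : ℕ) (_ : l < n),
      {ω | ω (-(n : ℤ) + l) = ω l} ∩ {ω | ω l = ω ((n : ℤ) + l)} := by
    ext ω
    simp [cubeSet]
  rw [h]
  exact (isClosed_OmegaS S).inter <| isClosed_iInter fun l => isClosed_iInter fun _ =>
    (isClosed_eq (continuous_apply (-(n : ℤ) + l)) (continuous_apply (l : ℤ))).inter
      (isClosed_eq (continuous_apply (l : ℤ)) (continuous_apply ((n : ℤ) + l)))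

lemma shift_mem_cubeSet {S : A → List A} {ω : ℤ → A} {w f : List A} {q j : ℤ}
    (hω : ω ∈ OmegaS S) (hocc : OccAt ω (w ++ w ++ w ++ f) q) (hf : f <+: w)
    (hj₁ : q + w.length ≤ j) (hj₂ : j ≤ q + w.length + f.length) :
    shift j ω ∈ cubeSet S w.length := by
  have hper := fun x => hocc.apply_eq_apply_add (drop_length_prefix_cube hf) (x := x)
  simp only [List.length_append] at hper
  refine ⟨shift_mem_OmegaS j hω, fun l hl => ⟨?_, ?_⟩⟩
  · have := hper (-w.length + l + j) (by omega) (by push_cast; omega)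
    simp only [shift]
    rw [this]
    ring_nf
  · have := hper (l + j) (by omega) (by push_cast; omega)
    simp only [shift]
    rw [this]
    ring_nf

open Classical in
lemma card_filter_shift_mem_cubeSet {S : A → List A} {ω : ℤ → A} {w f : List A} {i : ℕ}
    (hω : ω ∈ OmegaS S) (hocc : OccAt ω (w ++ w ++ w ++ f) i) (hf : f <+: w) :
    f.length + 1 ≤ (Finset.filter (fun j => (shift 1)^[j] ω ∈ cubeSet S w.length)
      (Finset.range (i + w.length + f.length + 1))).card := by
  calc f.length + 1 = (Finset.Icc (i + w.length) (i + w.length + f.length)).card := by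
        rw [Nat.card_Icc]; omega
    _ ≤ _ := Finset.card_le_card fun j hj => ?_
  rw [Finset.mem_Icc] at hj
  rw [Finset.mem_filter, Finset.mem_range, shift_one_iterate]
  exact ⟨by omega, shift_mem_cubeSet hω hocc hf (by omega) (by omega)⟩

variable [TopologicalSpace A] [DiscreteTopology A] [Finite A] {S : A → List A} {e : A}

open Classical in
lemma exists_forall_card_shift_mem_cubeSet (hmin : Minimal S) (hC : CondC S)
    (he : e ∈ Cset S) {u : List A} (hhead : u.head? = some e)
    (hcube : u ++ u ++ u ++ [e] ∈ WS S) :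
    ∃ C : ℕ, 0 < C ∧ ∀ k, ∃ m : ℕ, ∀ ω ∈ OmegaS S, m + 1 ≤
      (Finset.filter (fun j => (shift 1)^[j] ω ∈ cubeSet S (iter S k u).length)
        (Finset.range (C * (m + 1)))).card := by
  obtain ⟨R, -, hR⟩ := bddGaps_WS hmin hC hcube
  obtain ⟨K, hK0, hK⟩ := exists_length_iter_le_mul hmin hC he
  refine ⟨(R + 2) * K + 1, by positivity, fun k => ⟨(iter S k [e]).length, fun ω hω => ?_⟩⟩
  have hf : iter S k [e] <+: iter S k u := by
    obtain ⟨u', rfl⟩ := List.head?_eq_some_iff.mp hhead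
    rw [show e :: u' = [e] ++ u' from rfl, iter_append]
    exact List.prefix_append _ _
  have hcube_window := iter_infix_of_length_le hmin hC he hR (hK k)
    (Nat.mul_pos hK0 (length_iter_pos he k)) (window_mem_WS hω 0 _) (length_window ω 0 _).ge
  obtain ⟨i, hiG, hocc⟩ := (occAt_window ω 0 _).exists_occAt_of_infix hcube_window
  simp only [iter_append, List.length_append, length_window, zero_add] at hiG hocc
  refine (card_filter_shift_mem_cubeSet hω hocc hf).trans (Finset.card_le_card
    (Finset.filter_subset_filter _ (Finset.range_subset_range.mpr ?_)))
  nlinarith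

end Cubes

open Classical in
lemma natCast_mul_measure_le_of_card_le {X : Type*} [MeasurableSpace X] {μ : Measure X}
    {f : X → X} (hf : MeasurePreserving f μ μ) {s E : Set X} (hs : MeasurableSet s)
    (hE : MeasurableSet E) {m N : ℕ}
    (h : ∀ x ∈ s, m ≤ (Finset.filter (fun j => f^[j] x ∈ E) (Finset.range N)).card) :
    m * μ s ≤ N * μ E := by
  have hpre : ∀ j, MeasurableSet (f^[j] ⁻¹' E) := fun j => (hf.iterate j).measurable hE
  calc (m : ℝ≥0∞) * μ s = ∫⁻ x, s.indicator (fun _ => (m : ℝ≥0∞)) x ∂μ :=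
        (lintegral_indicator_const hs _).symm
    _ ≤ ∫⁻ x, ∑ j ∈ Finset.range N, (f^[j] ⁻¹' E).indicator 1 x ∂μ := by
        refine lintegral_mono fun x => ?_
        by_cases hx : x ∈ s
        · simp only [Set.indicator_apply, Set.mem_preimage, Pi.one_apply, hx, if_true]
          rw [Finset.sum_boole]
          exact_mod_cast h x hx
        · simp [hx]
    _ = ∑ j ∈ Finset.range N, μ (f^[j] ⁻¹' E) := by
        rw [lintegral_finsetSum _ fun j _ => measurable_one.indicator (hpre j)]
        exact Finset.sum_congr rfl fun j _ => lintegral_indicator_one (hpre j)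
    _ = N * μ E := by
        simp [(hf.iterate _).measure_preimage hE.nullMeasurableSet]

lemma inv_natCast_le_of_le_mul {C m : ℕ} {x : ℝ≥0∞} (hC : 0 < C)
    (h : ((m + 1 : ℕ) : ℝ≥0∞) ≤ ((C * (m + 1) : ℕ) : ℝ≥0∞) * x) : (C : ℝ≥0∞)⁻¹ ≤ x := by
  rw [ENNReal.inv_le_iff_le_mul (fun _ => by positivity) (by simp)]
  rw [Nat.cast_mul, mul_comm (C : ℝ≥0∞), mul_assoc, ← mul_one ((m + 1 : ℕ) : ℝ≥0∞),
    mul_assoc, one_mul] at h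
  exact (ENNReal.mul_le_mul_iff_right (by simp) (by simp)).mp h

theorem statement10_general {A : Type*} [Fintype A] [TopologicalSpace A] [DiscreteTopology A]
    [MeasurableSpace A] [BorelSpace A]
    (S : A → List A) (hS : IsSubstSystem S) (hmin : Minimal S)
    (μ : Measure (ℤ → A))
    (hsupp : μ (OmegaS S) = 1) (hinv : μ.map (shift 1) = μ)
    (u : List A) (e : A) (he : e ∈ Cset S) (hhead : u.head? = some e)
    (hcube : u ++ u ++ u ++ [e] ∈ WS S) :
    0 < Filter.limsup (fun k : ℕ =>
      μ {ω ∈ OmegaS S | ∀ l : ℕ, l < (iter S k u).length →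
          ω (-((iter S k u).length : ℤ) + l) = ω l ∧
          ω l = ω (((iter S k u).length : ℤ) + l)}) atTop := by
  obtain ⟨C, hC0, hfreq⟩ := exists_forall_card_shift_mem_cubeSet hmin hS.2 he hhead hcube
  have hT : MeasurePreserving (shift 1) μ μ := ⟨(continuous_shift 1).measurable, hinv⟩
  have hbound : ∀ k, (C : ℝ≥0∞)⁻¹ ≤ μ (cubeSet S (iter S k u).length) := fun k => by
    obtain ⟨m, hm⟩ := hfreq k
    have h := natCast_mul_measure_le_of_card_le hT (isClosed_OmegaS S).measurableSet
      (isClosed_cubeSet S _).measurableSet hm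
    rw [hsupp, mul_one] at h
    exact inv_natCast_le_of_le_mul hC0 h
  exact (ENNReal.inv_pos.mpr (ENNReal.natCast_ne_top C)).trans_le
    (le_limsup_of_frequently_le (Frequently.of_forall hbound))

/-- cubes occur with positive frequency: with `n_k = |S^k(u)|`,
`limsup_k μ(Ω(n_k)) > 0`. -/
theorem statement10 {A : Type*} [Fintype A] [TopologicalSpace A] [DiscreteTopology A]
    [MeasurableSpace A] [BorelSpace A]
    (S : A → List A) (hS : IsSubstSystem S) (hmin : Minimal S)
    (μ : Measure (ℤ → A)) (hprob : IsProbabilityMeasure μ)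
    (hsupp : μ (OmegaS S) = 1) (hinv : μ.map (shift 1) = μ)
    (huniq : ∀ ν : Measure (ℤ → A), IsProbabilityMeasure ν → ν (OmegaS S) = 1 →
      ν.map (shift 1) = ν → ν = μ)
    (u : List A) (e : A) (hu : u ∈ WS S) (he : e ∈ Cset S) (hhead : u.head? = some e)
    (hcube : u ++ u ++ u ++ [e] ∈ WS S) :
    0 < Filter.limsup (fun k : ℕ =>
      μ {ω ∈ OmegaS S | ∀ l : ℕ, l < (iter S k u).length →
          ω (-((iter S k u).length : ℤ) + l) = ω l ∧
          ω l = ω (((iter S k u).length : ℤ) + l)}) atTop :=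
  statement10_general S hS hmin μ hsupp hinv u e he hhead hcube

end SubstLR
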